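/- The singular value thresholding operator solves the proximal problem for the nuclear norm: for any matrix M ∈ ℝ^{m×n} and τ > 0, the unique minimizer of X ↦ τ‖X‖_* + (1/2)‖X − M‖_F² is D_τ(M) = U diag(max(σ_i − τ, 0)) V^T, where M = U diag(σ_i) V^T is an SVD of M. -/

import Mathlib

open Matrix Finset

/-- Rectangular diagonal matrix with diagonal entries σ. -/
noncomputable def svdDiag (m n : ℕ) (σ : Fin (min m n) → ℝ) :
    Matrix (Fin m) (Fin n) ℝ :=
  Matrix.of fun i j =>
    if h : (i : ℕ) = (j : ℕ) ∧ (i : ℕ) < min m n then σ ⟨i, h.2⟩ else 0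

/-- Nuclear norm of a real matrix: sum of its singular values, i.e. the sum of
the square roots of the eigenvalues of Xᵀ X. -/
noncomputable def nuclearNorm {m n : ℕ} (X : Matrix (Fin m) (Fin n) ℝ) : ℝ :=
  ∑ i : Fin n, Real.sqrt ((Matrix.isHermitian_conjTranspose_mul_self X).eigenvalues i)

/-!
Let `W := M - D = U diag(min(σᵢ, τ)) Vᵀ`. Its singular values are at most `τ`, so
`⟪W, X⟫ ≤ τ ‖X‖_*` for every `X`: pair the columns of `W Q` and `X Q`, where `Q` is an orthonormal
eigenbasis of `Xᵀ X`, and apply Cauchy–Schwarz. Since `W` and `D` share their singular vectors and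
`min(σ, τ) · max(σ - τ, 0) = τ · max(σ - τ, 0)`, equality holds at `X = D`; that is,
`M - D ∈ τ ∂‖·‖_*(D)`. Expanding the square then gives the quadratic growth
`τ ‖X‖_* + ½ ‖X - M‖_F² ≥ τ ‖D‖_* + ½ ‖D - M‖_F² + ½ ‖X - D‖_F²`,
which yields both minimality and uniqueness.
-/

lemma Fin.sum_extend_castLE {M : Type*} [AddCommMonoid M] {k n : ℕ} (h : k ≤ n)
    (a : Fin k → M) : ∑ j, Function.extend (Fin.castLE h) a 0 j = ∑ i, a i :=
  (Fintype.sum_of_injective _ (Fin.castLE_injective h) _ _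
    (fun j hj => Function.extend_apply' a (0 : Fin n → M) j hj)
    (fun _ => ((Fin.castLE_injective h).extend_apply _ _ _).symm)).symm

lemma sub_max_sub_zero (a b : ℝ) : a - max (a - b) 0 = min a b := by
  rcases le_total a b with h | h
  · rw [max_eq_right (by linarith), min_eq_left h, sub_zero]
  · rw [max_eq_left (by linarith), min_eq_right h, sub_sub_cancel]

lemma min_mul_max_sub_zero (a b : ℝ) : min a b * max (a - b) 0 = b * max (a - b) 0 := by
  rcases le_total a b with h | h
  · rw [max_eq_right (by linarith), mul_zero, mul_zero]
  · rw [min_eq_right h]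

section SvdDiag

variable {m n : ℕ}

lemma svdDiag_apply_of_val_ne (a : Fin (min m n) → ℝ) {i : Fin m} {j : Fin n}
    (h : (i : ℕ) ≠ j) : svdDiag m n a i j = 0 :=
  dif_neg fun h' => h h'.1

lemma svdDiag_apply_of_min_le (a : Fin (min m n) → ℝ) (i : Fin m) {j : Fin n}
    (h : min m n ≤ j) : svdDiag m n a i j = 0 :=
  dif_neg fun h' => by omega

lemma svdDiag_apply_castLE (a : Fin (min m n) → ℝ) (k : Fin (min m n)) :
    svdDiag m n a (Fin.castLE (min_le_left m n) k) (Fin.castLE (min_le_right m n) k) = a k :=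
  dif_pos ⟨rfl, k.2⟩

lemma svdDiag_sub (a b : Fin (min m n) → ℝ) :
    svdDiag m n a - svdDiag m n b = svdDiag m n (a - b) := by
  ext i j
  simp only [svdDiag, Matrix.sub_apply, of_apply, Pi.sub_apply]
  split_ifs <;> simp

lemma svdDiag_transpose_mul_svdDiag (a b : Fin (min m n) → ℝ) :
    (svdDiag m n a)ᵀ * svdDiag m n b =
      diagonal (Function.extend (Fin.castLE (min_le_right m n)) (a * b) 0) := by
  ext j k
  rw [mul_apply]
  simp only [transpose_apply]
  obtain hj | hj := lt_or_ge (j : ℕ) (min m n)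
  · obtain ⟨j, rfl⟩ : ∃ j' : Fin (min m n), Fin.castLE (min_le_right m n) j' = j :=
      ⟨⟨j, hj⟩, rfl⟩
    rw [Finset.sum_eq_single (Fin.castLE (min_le_left m n) j)]
    · rw [svdDiag_apply_castLE]
      obtain rfl | hjk := eq_or_ne (Fin.castLE (min_le_right m n) j) k
      · rw [svdDiag_apply_castLE, diagonal_apply_eq, (Fin.castLE_injective _).extend_apply]; rfl
      · rw [svdDiag_apply_of_val_ne, diagonal_apply_ne _ hjk, mul_zero]
        simpa [Fin.ext_iff] using hjk
    · intro i _ hi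
      rw [svdDiag_apply_of_val_ne, zero_mul]
      simpa [Fin.ext_iff] using hi
    · simp
  · obtain rfl | hjk := eq_or_ne j k
    · rw [diagonal_apply_eq,
        Function.extend_apply' _ _ _ (by rintro ⟨i, rfl⟩; exact absurd i.2 (not_lt.mpr hj))]
      simp [svdDiag_apply_of_min_le _ _ hj]
    · simp [svdDiag_apply_of_min_le _ _ hj, diagonal_apply_ne _ hjk]

lemma trace_svdDiag_transpose_mul_svdDiag (a b : Fin (min m n) → ℝ) :
    ((svdDiag m n a)ᵀ * svdDiag m n b).trace = ∑ k, a k * b k := by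
  rw [svdDiag_transpose_mul_svdDiag, trace_diagonal, Fin.sum_extend_castLE]; rfl

end SvdDiag

section OrthogonalConj

variable {R : Type*} [CommSemiring R] {l m n : Type*} [Fintype l] [Fintype m] [Fintype n]

lemma dotProduct_transpose_mul_mulVec (A : Matrix m n R) (B : Matrix m l R) (v : n → R)
    (w : l → R) : v ⬝ᵥ ((Aᵀ * B) *ᵥ w) = (A *ᵥ v) ⬝ᵥ (B *ᵥ w) := by
  rw [← mulVec_mulVec, dotProduct_mulVec, vecMul_transpose]

lemma mulVec_dotProduct_mulVec_self [DecidableEq n] {A : Matrix m n R} (hA : Aᵀ * A = 1)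
    (v : n → R) : (A *ᵥ v) ⬝ᵥ (A *ᵥ v) = v ⬝ᵥ v := by
  rw [← dotProduct_transpose_mul_mulVec, hA, one_mulVec]

lemma trace_eq_sum_dotProduct_mulVec [DecidableEq n] {Q : Matrix n n R} (hQ : Q * Qᵀ = 1)
    (B : Matrix n n R) : B.trace = ∑ i, Qᵀ i ⬝ᵥ (B *ᵥ Qᵀ i) := by
  calc B.trace = (Qᵀ * (B * Q)).trace := by
        rw [trace_mul_comm, Matrix.mul_assoc, hQ, Matrix.mul_one]
    _ = ∑ i, Qᵀ i ⬝ᵥ (B *ᵥ Qᵀ i) := by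
        simp only [trace, diag_apply, mul_apply, mulVec, dotProduct, transpose_apply]

lemma trace_conj_transpose_mul_conj [DecidableEq m] [DecidableEq n] {U : Matrix m m R}
    {V : Matrix n n R} (hU : Uᵀ * U = 1) (hV : Vᵀ * V = 1) (A B : Matrix m n R) :
    ((U * A * Vᵀ)ᵀ * (U * B * Vᵀ)).trace = (Aᵀ * B).trace := by
  simp only [transpose_mul, transpose_transpose, Matrix.mul_assoc]
  rw [← Matrix.mul_assoc Uᵀ, hU, Matrix.one_mul, trace_mul_comm, Matrix.mul_assoc,
    Matrix.mul_assoc, hV, Matrix.mul_one]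

end OrthogonalConj

section Frobenius

variable {m n : Type*} [Fintype m] [Fintype n]

lemma trace_transpose_mul_comm (A B : Matrix m n ℝ) : (Aᵀ * B).trace = (Bᵀ * A).trace := by
  rw [← trace_transpose, transpose_mul, transpose_transpose]

lemma trace_transpose_mul_self_nonneg (A : Matrix m n ℝ) : 0 ≤ (Aᵀ * A).trace :=
  (posSemidef_conjTranspose_mul_self A).trace_nonneg

lemma trace_transpose_mul_self_eq_zero_iff {A : Matrix m n ℝ} : (Aᵀ * A).trace = 0 ↔ A = 0 :=
  trace_conjTranspose_mul_self_eq_zero_iff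

lemma trace_transpose_mul_self_sub (A B : Matrix m n ℝ) :
    ((A - B)ᵀ * (A - B)).trace = (Aᵀ * A).trace - 2 * (Bᵀ * A).trace + (Bᵀ * B).trace := by
  simp only [transpose_sub, Matrix.sub_mul, Matrix.mul_sub, trace_sub]
  rw [trace_transpose_mul_comm A B]
  ring

theorem prox_quadratic_growth (N : Matrix m n ℝ → ℝ) (τ : ℝ) (M D X : Matrix m n ℝ)
    (hle : ((M - D)ᵀ * X).trace ≤ τ * N X) (heq : ((M - D)ᵀ * D).trace = τ * N D) :
    τ * N D + 1 / 2 * ((D - M)ᵀ * (D - M)).trace + 1 / 2 * ((X - D)ᵀ * (X - D)).trace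
      ≤ τ * N X + 1 / 2 * ((X - M)ᵀ * (X - M)).trace := by
  have hXM : X - M = (X - D) - (M - D) := by abel
  have hDM : ((D - M)ᵀ * (D - M)).trace = ((M - D)ᵀ * (M - D)).trace := by
    rw [← neg_sub M D, transpose_neg, Matrix.neg_mul, Matrix.mul_neg, neg_neg]
  rw [hDM, hXM, trace_transpose_mul_self_sub (X - D), Matrix.mul_sub (M - D)ᵀ X D, trace_sub]
  linarith

end Frobenius

theorem Matrix.IsHermitian.sum_comp_eigenvalues_eq {n : Type*} [Fintype n] [DecidableEq n]
    {A Q : Matrix n n ℝ} (hA : A.IsHermitian) {d : n → ℝ} (hQ : Qᵀ * Q = 1)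
    (hAQ : A = Q * diagonal d * Qᵀ) (f : ℝ → ℝ) :
    ∑ i, f (hA.eigenvalues i) = ∑ i, f (d i) := by
  have hchar : A.charpoly = (diagonal d).charpoly := by
    rw [hAQ, Matrix.mul_assoc, charpoly_mul_comm, Matrix.mul_assoc, hQ, Matrix.mul_one]
  have hroots : univ.val.map hA.eigenvalues = univ.val.map d := by
    have h := congrArg Polynomial.roots hchar
    rw [hA.roots_charpoly_eq_eigenvalues, charpoly_diagonal, Polynomial.roots_prod _ _
      (prod_ne_zero_iff.mpr fun i _ => Polynomial.X_sub_C_ne_zero (d i))] at h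
    simpa using h
  simpa only [Finset.sum_eq_multiset_sum, Multiset.map_map, Function.comp_def] using
    congrArg (fun s => (s.map f).sum) hroots

section SingularValues

variable {m n : ℕ}

lemma transpose_conj_mul_conj_svdDiag {U : Matrix (Fin m) (Fin m) ℝ} (hU : Uᵀ * U = 1)
    (V : Matrix (Fin n) (Fin n) ℝ) (a : Fin (min m n) → ℝ) :
    (U * svdDiag m n a * Vᵀ)ᵀ * (U * svdDiag m n a * Vᵀ) =
      V * diagonal (Function.extend (Fin.castLE (min_le_right m n)) (a * a) 0) * Vᵀ := by
  simp only [transpose_mul, transpose_transpose, Matrix.mul_assoc]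
  rw [← Matrix.mul_assoc Uᵀ, hU, Matrix.one_mul, ← Matrix.mul_assoc (svdDiag m n a)ᵀ,
    svdDiag_transpose_mul_svdDiag]

theorem nuclearNorm_conj_svdDiag {U : Matrix (Fin m) (Fin m) ℝ} {V : Matrix (Fin n) (Fin n) ℝ}
    (hU : Uᵀ * U = 1) (hV : Vᵀ * V = 1) {s : Fin (min m n) → ℝ} (hs : ∀ k, 0 ≤ s k) :
    nuclearNorm (U * svdDiag m n s * Vᵀ) = ∑ k, s k := by
  have hXX : (U * svdDiag m n s * Vᵀ)ᴴ * (U * svdDiag m n s * Vᵀ) =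
      V * diagonal (Function.extend (Fin.castLE (min_le_right m n)) (s * s) 0) * Vᵀ := by
    rw [conjTranspose_eq_transpose_of_trivial, transpose_conj_mul_conj_svdDiag hU]
  rw [nuclearNorm, IsHermitian.sum_comp_eigenvalues_eq _ hV hXX]
  simp only [Function.apply_extend Real.sqrt]
  rw [← Fin.sum_extend_castLE (min_le_right m n)]
  congr with j
  congr 1
  · funext k; exact Real.sqrt_mul_self (hs k)
  · funext j; exact Real.sqrt_zero

lemma svdDiag_mulVec_dotProduct_self_le {τ : ℝ} {c : Fin (min m n) → ℝ} (hc : ∀ k, |c k| ≤ τ)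
    (w : Fin n → ℝ) :
    (svdDiag m n c *ᵥ w) ⬝ᵥ (svdDiag m n c *ᵥ w) ≤ τ ^ 2 * (w ⬝ᵥ w) := by
  have he : ∀ j, Function.extend (Fin.castLE (min_le_right m n)) (c * c) 0 j ≤ τ ^ 2 := by
    intro j
    by_cases hj : ∃ k, Fin.castLE (min_le_right m n) k = j
    · obtain ⟨k, rfl⟩ := hj
      rw [(Fin.castLE_injective _).extend_apply, Pi.mul_apply, ← sq]
      exact sq_le_sq' (abs_le.mp (hc k)).1 (abs_le.mp (hc k)).2
    · rw [Function.extend_apply' _ _ _ hj]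
      exact sq_nonneg τ
  rw [← dotProduct_transpose_mul_mulVec, svdDiag_transpose_mul_svdDiag, dotProduct, dotProduct,
    mul_sum]
  refine sum_le_sum fun j _ => ?_
  rw [mulVec_diagonal, mul_left_comm]
  exact mul_le_mul_of_nonneg_right (he j) (mul_self_nonneg _)

lemma conj_svdDiag_mulVec_dotProduct_self_le {U : Matrix (Fin m) (Fin m) ℝ}
    {V : Matrix (Fin n) (Fin n) ℝ} (hU : Uᵀ * U = 1) (hV : Vᵀ * V = 1) {τ : ℝ}
    {c : Fin (min m n) → ℝ} (hc : ∀ k, |c k| ≤ τ) (v : Fin n → ℝ) :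
    ((U * svdDiag m n c * Vᵀ) *ᵥ v) ⬝ᵥ ((U * svdDiag m n c * Vᵀ) *ᵥ v) ≤ τ ^ 2 * (v ⬝ᵥ v) := by
  have hVt : Vᵀᵀ * Vᵀ = 1 := by rw [transpose_transpose]; exact mul_eq_one_comm.mp hV
  simp only [← mulVec_mulVec]
  rw [mulVec_dotProduct_mulVec_self hU, ← mulVec_dotProduct_mulVec_self hVt v]
  exact svdDiag_mulVec_dotProduct_self_le hc _

end SingularValues

theorem trace_transpose_mul_le_nuclearNorm {m n : ℕ} {τ : ℝ} (hτ : 0 ≤ τ)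
    {W : Matrix (Fin m) (Fin n) ℝ} (hW : ∀ v, (W *ᵥ v) ⬝ᵥ (W *ᵥ v) ≤ τ ^ 2 * (v ⬝ᵥ v))
    (X : Matrix (Fin m) (Fin n) ℝ) :
    (Wᵀ * X).trace ≤ τ * nuclearNorm X := by
  set hH := isHermitian_conjTranspose_mul_self X
  set Q : Matrix (Fin n) (Fin n) ℝ := (hH.eigenvectorUnitary : Matrix (Fin n) (Fin n) ℝ)
  have hQ : Q * Qᵀ = 1 := by
    simpa [Q, star_eq_conjTranspose] using mem_unitaryGroup_iff.mp hH.eigenvectorUnitary.2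
  rw [trace_eq_sum_dotProduct_mulVec hQ, nuclearNorm, mul_sum]
  refine sum_le_sum fun i _ => ?_
  have hq : Qᵀ i ⬝ᵥ Qᵀ i = 1 := by
    simpa [Q, star_eq_conjTranspose, mul_apply', dotProduct_comm] using
      congrFun (congrFun (mem_unitaryGroup_iff'.mp hH.eigenvectorUnitary.2) i) i
  have hXq : (X *ᵥ Qᵀ i) ⬝ᵥ (X *ᵥ Qᵀ i) = hH.eigenvalues i := by
    have hv : (Xᵀ * X) *ᵥ Qᵀ i = hH.eigenvalues i • Qᵀ i := by
      have h := hH.mulVec_eigenvectorBasis i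
      simp only [conjTranspose_eq_transpose_of_trivial] at h
      exact h
    rw [← dotProduct_transpose_mul_mulVec, hv, dotProduct_smul, hq, smul_eq_mul, mul_one]
  have hWq : √((W *ᵥ Qᵀ i) ⬝ᵥ (W *ᵥ Qᵀ i)) ≤ τ := by
    rw [Real.sqrt_le_left hτ]
    simpa [hq] using hW (Qᵀ i)
  calc Qᵀ i ⬝ᵥ ((Wᵀ * X) *ᵥ Qᵀ i) = (W *ᵥ Qᵀ i) ⬝ᵥ (X *ᵥ Qᵀ i) :=
        dotProduct_transpose_mul_mulVec _ _ _ _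
    _ ≤ √((W *ᵥ Qᵀ i) ⬝ᵥ (W *ᵥ Qᵀ i)) * √((X *ᵥ Qᵀ i) ⬝ᵥ (X *ᵥ Qᵀ i)) := by
        simpa only [dotProduct, sq] using
          Real.sum_mul_le_sqrt_mul_sqrt univ (W *ᵥ Qᵀ i) (X *ᵥ Qᵀ i)
    _ ≤ τ * √(hH.eigenvalues i) := by
        rw [hXq]
        exact mul_le_mul_of_nonneg_right hWq (Real.sqrt_nonneg _)

theorem svt_solves_nuclear_norm_prox_general (m n : ℕ) (τ : ℝ) (hτ : 0 < τ)
    (M : Matrix (Fin m) (Fin n) ℝ)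
    (U : Matrix (Fin m) (Fin m) ℝ) (V : Matrix (Fin n) (Fin n) ℝ)
    (σ : Fin (min m n) → ℝ) (hσ0 : ∀ j, 0 ≤ σ j)
    (hU' : Uᵀ * U = 1)
    (hV' : Vᵀ * V = 1)
    (hM : M = U * svdDiag m n σ * Vᵀ)
    (D : Matrix (Fin m) (Fin n) ℝ)
    (hD : D = U * svdDiag m n (fun j => max (σ j - τ) 0) * Vᵀ)
    (g : Matrix (Fin m) (Fin n) ℝ → ℝ)
    (hg : ∀ X, g X = τ * nuclearNorm X + 1 / 2 * ((X - M)ᵀ * (X - M)).trace) :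
    (∀ X, g D ≤ g X) ∧ ∀ X, g X = g D → X = D := by
  set c : Fin (min m n) → ℝ := fun j => min (σ j) τ
  have hMD : M - D = U * svdDiag m n c * Vᵀ := by
    rw [hM, hD, ← Matrix.sub_mul, ← Matrix.mul_sub, svdDiag_sub]
    congr with j
    exact sub_max_sub_zero (σ j) τ
  have hc : ∀ j, |c j| ≤ τ := fun j =>
    abs_le.mpr ⟨by linarith [le_min (hσ0 j) hτ.le], min_le_right _ _⟩
  have hle : ∀ X, ((M - D)ᵀ * X).trace ≤ τ * nuclearNorm X := by
    rw [hMD]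
    exact trace_transpose_mul_le_nuclearNorm hτ.le
      (conj_svdDiag_mulVec_dotProduct_self_le hU' hV' hc)
  have heq : ((M - D)ᵀ * D).trace = τ * nuclearNorm D := by
    rw [hMD, hD, trace_conj_transpose_mul_conj hU' hV', trace_svdDiag_transpose_mul_svdDiag,
      nuclearNorm_conj_svdDiag hU' hV' (fun j => le_max_right _ _), mul_sum]
    exact sum_congr rfl fun j _ => min_mul_max_sub_zero (σ j) τ
  have hgap X : g D + 1 / 2 * ((X - D)ᵀ * (X - D)).trace ≤ g X := by
    rw [hg, hg]
    linarith [prox_quadratic_growth nuclearNorm τ M D X (hle X) heq]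
  refine ⟨fun X => ?_, fun X hX => ?_⟩
  · linarith [hgap X, trace_transpose_mul_self_nonneg (X - D)]
  · have h0 : ((X - D)ᵀ * (X - D)).trace = 0 := by
      linarith [hgap X, trace_transpose_mul_self_nonneg (X - D)]
    exact sub_eq_zero.mp (trace_transpose_mul_self_eq_zero_iff.mp h0)

/-- singular value thresholding D_τ(M) = U diag(max(σᵢ − τ, 0)) Vᵀ
is the unique minimizer of X ↦ τ‖X‖_* + (1/2)‖X − M‖_F². -/
theorem svt_solves_nuclear_norm_prox (m n : ℕ) (τ : ℝ) (hτ : 0 < τ)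
    (M : Matrix (Fin m) (Fin n) ℝ)
    (U : Matrix (Fin m) (Fin m) ℝ) (V : Matrix (Fin n) (Fin n) ℝ)
    (σ : Fin (min m n) → ℝ) (hσ0 : ∀ j, 0 ≤ σ j)
    (hU : U * Uᵀ = 1) (hU' : Uᵀ * U = 1)
    (hV : V * Vᵀ = 1) (hV' : Vᵀ * V = 1)
    (hM : M = U * svdDiag m n σ * Vᵀ)
    (D : Matrix (Fin m) (Fin n) ℝ)
    (hD : D = U * svdDiag m n (fun j => max (σ j - τ) 0) * Vᵀ)
    (g : Matrix (Fin m) (Fin n) ℝ → ℝ)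
    (hg : ∀ X, g X = τ * nuclearNorm X + 1 / 2 * ((X - M)ᵀ * (X - M)).trace) :
    (∀ X, g D ≤ g X) ∧ ∀ X, g X = g D → X = D :=
  svt_solves_nuclear_norm_prox_general m n τ hτ M U V σ hσ0 hU' hV' hM D hD g hg
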